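/- Let F be the cumulative distribution function of the standard Gaussian measure on ℝ, φ = F' its density, and U = φ ∘ F⁻¹ on (0,1), extended by U(0) = U(1) = 0. Then U is strictly positive on (0,1) and concave on [0,1]; consequently Φ = −U is convex on [0,1] and, on (0,1), −1/Φ'' = −U is convex. -/

import Mathlib

open MeasureTheory

/-- The standard Gaussian density `φ(t) = (2π)^{−1/2} e^{−t²/2}`. -/
noncomputable def gaussPdf (t : ℝ) : ℝ :=
  (Real.sqrt (2 * Real.pi))⁻¹ * Real.exp (-t ^ 2 / 2)

/-- The standard Gaussian cumulative distribution function
`F(t) = ∫_{−∞}^{t} (2π)^{−1/2} e^{−s²/2} ds`. -/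
noncomputable def gaussCdf (t : ℝ) : ℝ :=
  ∫ s in Set.Iic t, gaussPdf s

/-- The inverse `F⁻¹ : (0,1) → ℝ` of the standard Gaussian cdf. -/
noncomputable def gaussCdfInv : ℝ → ℝ :=
  Function.invFun gaussCdf

/-- The Gaussian isoperimetry function `U = φ ∘ F⁻¹` on `(0,1)`, extended by
`U(0) = U(1) = 0` (and by `0` outside `[0,1]`). -/
noncomputable def isoUext (x : ℝ) : ℝ :=
  if x ∈ Set.Ioo (0 : ℝ) 1 then gaussPdf (gaussCdfInv x) else 0

/-!
Since `φ'(t) = -t φ(t)` and `(F⁻¹)' = 1 / φ(F⁻¹)`, the chain rule gives `U' = -F⁻¹`, which is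
decreasing on `(0,1)`. As `F⁻¹` tends to `∓∞` at the endpoints and `φ` vanishes at infinity,
the extension by `U(0) = U(1) = 0` is continuous on `[0,1]`, hence concave there.
-/

open Real Filter Set Topology ProbabilityTheory

theorem hasDerivAt_integral_Iic {E : Type*} [NormedAddCommGroup E] [NormedSpace ℝ E]
    [CompleteSpace E] {f : ℝ → E} (hf : Integrable f) (hc : Continuous f) (t : ℝ) :
    HasDerivAt (fun u => ∫ s in Iic u, f s) (f t) t := by
  have hsplit : (fun u => ∫ s in Iic u, f s) =
      fun u => (∫ s in Iic 0, f s) + ∫ s in (0 : ℝ)..u, f s := by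
    ext u
    rw [← intervalIntegral.integral_Iic_sub_Iic hf.integrableOn hf.integrableOn, add_sub_cancel]
  rw [hsplit]
  exact (intervalIntegral.integral_hasDerivAt_right hf.intervalIntegrable
    (hc.stronglyMeasurableAtFilter _ _) hc.continuousAt).const_add _

theorem continuousOn_Icc_of_continuousOn_Ioo {f : ℝ → ℝ} {a b : ℝ} (hab : a < b)
    (hf : ContinuousOn f (Ioo a b)) (ha : Tendsto f (𝓝[>] a) (𝓝 (f a)))
    (hb : Tendsto f (𝓝[<] b) (𝓝 (f b))) : ContinuousOn f (Icc a b) := by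
  intro x ⟨hax, hxb⟩
  rcases hax.eq_or_lt with rfl | hax
  · exact (continuousWithinAt_Icc_iff_Ici hab).2 (continuousWithinAt_Ioi_iff_Ici.1 ha)
  rcases hxb.eq_or_lt with rfl | hxb
  · exact (continuousWithinAt_Icc_iff_Iic hab).2 (continuousWithinAt_Iio_iff_Iic.1 hb)
  exact (hf.continuousAt (Ioo_mem_nhds hax hxb)).continuousWithinAt

theorem gaussPdf_eq_gaussianPDFReal : gaussPdf = gaussianPDFReal 0 1 := by
  ext t
  simp [gaussPdf, gaussianPDFReal]

theorem gaussPdf_pos (t : ℝ) : 0 < gaussPdf t := by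
  rw [gaussPdf_eq_gaussianPDFReal]
  exact gaussianPDFReal_pos _ _ _ one_ne_zero

theorem continuous_gaussPdf : Continuous gaussPdf := by
  unfold gaussPdf
  fun_prop

theorem hasDerivAt_gaussPdf (t : ℝ) : HasDerivAt gaussPdf (-t * gaussPdf t) t := by
  show HasDerivAt (fun s => (√(2 * π))⁻¹ * exp (-s ^ 2 / 2)) _ t
  refine (((hasDerivAt_pow 2 t).fun_neg.div_const 2).exp.const_mul _).congr_deriv ?_
  simp only [gaussPdf]
  push_cast
  ring

theorem tendsto_gaussPdf_cocompact : Tendsto gaussPdf (cocompact ℝ) (𝓝 0) := by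
  unfold gaussPdf
  have h : Tendsto (fun t : ℝ => -‖t‖ ^ 2 / 2) (cocompact ℝ) atBot :=
    (tendsto_neg_atTop_atBot.comp ((tendsto_pow_atTop two_ne_zero).comp
      tendsto_norm_cocompact_atTop)).atBot_div_const two_pos
  simpa [Function.comp_def, sq_abs] using (tendsto_exp_atBot.comp h).const_mul (√(2 * π))⁻¹

theorem gaussCdf_eq_cdf_gaussianReal : gaussCdf = cdf (gaussianReal 0 1) := by
  ext t
  rw [cdf_eq_real, measureReal_def, gaussianReal_apply_eq_integral _ one_ne_zero,
    ENNReal.toReal_ofReal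
      (setIntegral_nonneg measurableSet_Iic fun s _ => gaussianPDFReal_nonneg _ _ _),
    gaussCdf, gaussPdf_eq_gaussianPDFReal]

theorem hasDerivAt_gaussCdf (t : ℝ) : HasDerivAt gaussCdf (gaussPdf t) t := by
  have hf : Integrable gaussPdf := by
    rw [gaussPdf_eq_gaussianPDFReal]; exact integrable_gaussianPDFReal _ _
  exact hasDerivAt_integral_Iic hf continuous_gaussPdf t

theorem strictMono_gaussCdf : StrictMono gaussCdf :=
  strictMono_of_hasDerivAt_pos hasDerivAt_gaussCdf gaussPdf_pos

theorem range_gaussCdf : range gaussCdf = Ioo 0 1 := by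
  have hbot : Tendsto gaussCdf atBot (𝓝 0) := gaussCdf_eq_cdf_gaussianReal ▸ tendsto_cdf_atBot _
  have htop : Tendsto gaussCdf atTop (𝓝 1) := gaussCdf_eq_cdf_gaussianReal ▸ tendsto_cdf_atTop _
  refine Subset.antisymm ?_ fun x hx => ?_
  · rintro _ ⟨t, rfl⟩
    exact ⟨strictMono_gaussCdf.monotone.le_of_tendsto hbot (t - 1) |>.trans_lt
      (strictMono_gaussCdf (sub_one_lt t)),
      (strictMono_gaussCdf (lt_add_one t)).trans_le
        (strictMono_gaussCdf.monotone.ge_of_tendsto htop (t + 1))⟩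
  · exact mem_range_of_exists_le_of_exists_ge
      (continuous_iff_continuousAt.2 fun t => (hasDerivAt_gaussCdf t).continuousAt)
      ((hbot.eventually_le_const hx.1).exists) ((htop.eventually_const_le hx.2).exists)

theorem gaussCdf_mem_Ioo (t : ℝ) : gaussCdf t ∈ Ioo 0 1 :=
  range_gaussCdf ▸ mem_range_self t

theorem gaussCdfInv_gaussCdf (t : ℝ) : gaussCdfInv (gaussCdf t) = t :=
  Function.leftInverse_invFun strictMono_gaussCdf.injective t

theorem gaussCdf_gaussCdfInv {x : ℝ} (hx : x ∈ Ioo 0 1) : gaussCdf (gaussCdfInv x) = x :=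
  Function.invFun_eq (range_gaussCdf ▸ hx : x ∈ range gaussCdf)

theorem strictMonoOn_gaussCdfInv : StrictMonoOn gaussCdfInv (Ioo 0 1) := fun x hx y hy hxy =>
  strictMono_gaussCdf.lt_iff_lt.1 (by rwa [gaussCdf_gaussCdfInv hx, gaussCdf_gaussCdfInv hy])

theorem image_gaussCdfInv : gaussCdfInv '' Ioo 0 1 = univ :=
  eq_univ_of_forall fun t => ⟨gaussCdf t, gaussCdf_mem_Ioo t, gaussCdfInv_gaussCdf t⟩

theorem hasDerivAt_gaussCdfInv {x : ℝ} (hx : x ∈ Ioo 0 1) :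
    HasDerivAt gaussCdfInv (gaussPdf (gaussCdfInv x))⁻¹ x := by
  have hcont : ContinuousAt gaussCdfInv x :=
    continuousAt_of_monotoneOn_of_image_mem_nhds strictMonoOn_gaussCdfInv.monotoneOn
      (Ioo_mem_nhds hx.1 hx.2) (image_gaussCdfInv ▸ univ_mem)
  refine .of_local_left_inverse hcont (hasDerivAt_gaussCdf _) (gaussPdf_pos _).ne' ?_
  filter_upwards [Ioo_mem_nhds hx.1 hx.2] with y hy
  exact gaussCdf_gaussCdfInv hy

theorem tendsto_gaussCdfInv_nhdsGT_zero : Tendsto gaussCdfInv (𝓝[>] 0) atBot := by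
  refine tendsto_atBot.2 fun t => ?_
  have ht := gaussCdf_mem_Ioo t
  filter_upwards [Ioo_mem_nhdsGT ht.1] with x hx
  simpa only [gaussCdfInv_gaussCdf] using
    (strictMonoOn_gaussCdfInv ⟨hx.1, hx.2.trans ht.2⟩ ht hx.2).le

theorem tendsto_gaussCdfInv_nhdsLT_one : Tendsto gaussCdfInv (𝓝[<] 1) atTop := by
  refine tendsto_atTop.2 fun t => ?_
  have ht := gaussCdf_mem_Ioo t
  filter_upwards [Ioo_mem_nhdsLT ht.2] with x hx
  simpa only [gaussCdfInv_gaussCdf] using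
    (strictMonoOn_gaussCdfInv ht ⟨ht.1.trans hx.1, hx.2⟩ hx.1).le

theorem isoUext_of_mem {x : ℝ} (hx : x ∈ Ioo 0 1) : isoUext x = gaussPdf (gaussCdfInv x) :=
  if_pos hx

theorem isoUext_pos {x : ℝ} (hx : x ∈ Ioo 0 1) : 0 < isoUext x :=
  isoUext_of_mem hx ▸ gaussPdf_pos _

theorem hasDerivAt_isoUext {x : ℝ} (hx : x ∈ Ioo 0 1) :
    HasDerivAt isoUext (-gaussCdfInv x) x := by
  have h := (hasDerivAt_gaussPdf _).comp x (hasDerivAt_gaussCdfInv hx)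
  rw [mul_assoc, mul_inv_cancel₀ (gaussPdf_pos _).ne', mul_one] at h
  refine h.congr_of_eventuallyEq ?_
  filter_upwards [Ioo_mem_nhds hx.1 hx.2] with y hy
  exact isoUext_of_mem hy

theorem continuousOn_isoUext : ContinuousOn isoUext (Icc 0 1) := by
  have hzero : isoUext 0 = 0 ∧ isoUext 1 = 0 := by simp [isoUext]
  refine continuousOn_Icc_of_continuousOn_Ioo zero_lt_one
    (fun x hx => (hasDerivAt_isoUext hx).continuousAt.continuousWithinAt) ?_ ?_
  · rw [hzero.1]
    refine ((tendsto_gaussPdf_cocompact.mono_left atBot_le_cocompact).comp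
      tendsto_gaussCdfInv_nhdsGT_zero).congr' ?_
    filter_upwards [Ioo_mem_nhdsGT zero_lt_one] with x hx
    exact (isoUext_of_mem hx).symm
  · rw [hzero.2]
    refine ((tendsto_gaussPdf_cocompact.mono_left atTop_le_cocompact).comp
      tendsto_gaussCdfInv_nhdsLT_one).congr' ?_
    filter_upwards [Ioo_mem_nhdsLT zero_lt_one] with x hx
    exact (isoUext_of_mem hx).symm

theorem concaveOn_isoUext : ConcaveOn ℝ (Icc 0 1) isoUext := by
  refine AntitoneOn.concaveOn_of_deriv (convex_Icc 0 1) continuousOn_isoUext ?_ ?_ <;>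
    rw [interior_Icc]
  · exact fun x hx => (hasDerivAt_isoUext hx).differentiableAt.differentiableWithinAt
  · intro x hx y hy hxy
    rw [(hasDerivAt_isoUext hx).deriv, (hasDerivAt_isoUext hy).deriv, neg_le_neg_iff]
    exact strictMonoOn_gaussCdfInv.monotoneOn hx hy hxy

/-- The Gaussian isoperimetry function `U`, extended by `U(0) = U(1) = 0`,
is strictly positive on `(0,1)` and concave on `[0,1]`; consequently `Φ = −U` is convex on
`[0,1]` and, on `(0,1)`, `−1/Φ'' = −U` is convex. -/
theorem isoUext_pos_concave_and_neg_convex :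
    (∀ x ∈ Set.Ioo (0 : ℝ) 1, 0 < isoUext x) ∧
      ConcaveOn ℝ (Set.Icc (0 : ℝ) 1) isoUext ∧
      ConvexOn ℝ (Set.Icc (0 : ℝ) 1) (fun x => -isoUext x) ∧
      ConvexOn ℝ (Set.Ioo (0 : ℝ) 1) (fun x => -isoUext x) :=
  ⟨fun _ => isoUext_pos, concaveOn_isoUext, concaveOn_isoUext.neg,
    concaveOn_isoUext.neg.subset Ioo_subset_Icc_self (convex_Ioo 0 1)⟩
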